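/- Let λ_c = λ₁ + ε_c be the Perron eigenvalue after node addition and γ = min_{i≠1} |λ₁ − λ_i| (the spectral gap of B). Then for any induced p-norm, ε_c ≤ max{ ‖LXR‖_p / λ₁², √(‖LXR‖_p / γ) − λ₁ }. -/

import Mathlib

open Matrix ENNReal

/-- The non-backtracking matrix of a graph, indexed by oriented edges (darts):
`B_{k→l, i→j} = δ_{jk} (1 - δ_{il})`. -/
def nbMatrix {V : Type*} [Fintype V] [DecidableEq V] (G : SimpleGraph V)
    [DecidableRel G.Adj] : Matrix G.Dart G.Dart ℂ :=
  fun e f => if f.toProd.2 = e.toProd.1 ∧ e.toProd.2 ≠ f.toProd.1 then 1 else 0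

/-- The orientation reversal operator `P`, with `(P v)_{k→l} = v_{l→k}`. -/
def revOp {V : Type*} [Fintype V] [DecidableEq V] (G : SimpleGraph V)
    [DecidableRel G.Adj] : Matrix G.Dart G.Dart ℂ :=
  fun e f => if f = e.symm then 1 else 0


/-- The graph `G^c` obtained from `G` by adding a new node `c` (the vertex `none`)
joined to exactly the vertices in `S`. -/
def addNode {V : Type*} (G : SimpleGraph V) (S : Finset V) : SimpleGraph (Option V) where
  Adj x y :=
    match x, y with
    | some a, some b => G.Adj a b
    | some a, none => a ∈ S
    | none, some b => b ∈ S
    | none, none => False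
  symm := ⟨by
    intro x y h
    match x, y with
    | some a, some b => exact G.adj_symm h
    | some a, none => exact h
    | none, some b => exact h⟩
  loopless := ⟨by
    intro x h
    match x with
    | some a => exact G.irrefl h
    | none => exact h⟩

instance {V : Type*} [DecidableEq V] (G : SimpleGraph V) [DecidableRel G.Adj] (S : Finset V) :
    DecidableRel (addNode G S).Adj := fun x y =>
  match x, y with
  | some a, some b => inferInstanceAs (Decidable (G.Adj a b))
  | some a, none => inferInstanceAs (Decidable (a ∈ S))
  | none, some b => inferInstanceAs (Decidable (b ∈ S))
  | none, none => inferInstanceAs (Decidable False)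

variable {V : Type*} [Fintype V] [DecidableEq V]

/-- A dart of `G^c` is *new* if it is incident to the added node `c = none`. -/
def isNewDart {V : Type*} (G : SimpleGraph V) (S : Finset V)
    (e : (addNode G S).Dart) : Prop :=
  e.toProd.1 = none ∨ e.toProd.2 = none

instance {V : Type*} [DecidableEq V] (G : SimpleGraph V) (S : Finset V) :
    DecidablePred (isNewDart G S) := fun e =>
  inferInstanceAs (Decidable (_ ∨ _))

/-- The NB matrix of `G^c`. -/
def Bc (G : SimpleGraph V) [DecidableRel G.Adj] (S : Finset V) :
    Matrix (addNode G S).Dart (addNode G S).Dart ℂ := nbMatrix (addNode G S)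

/-- The block `D` of `B^c` (rows: old edges, columns: new edges), zero-padded to full size. -/
def Dblk (G : SimpleGraph V) [DecidableRel G.Adj] (S : Finset V) :
    Matrix (addNode G S).Dart (addNode G S).Dart ℂ :=
  fun e f => if ¬ isNewDart G S e ∧ isNewDart G S f then Bc G S e f else 0

/-- The block `E` of `B^c` (rows: new edges, columns: old edges), zero-padded to full size. -/
def Eblk (G : SimpleGraph V) [DecidableRel G.Adj] (S : Finset V) :
    Matrix (addNode G S).Dart (addNode G S).Dart ℂ :=
  fun e f => if isNewDart G S e ∧ ¬ isNewDart G S f then Bc G S e f else 0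

/-- The block `F` of `B^c` (rows and columns: new edges), zero-padded to full size. -/
def Fblk (G : SimpleGraph V) [DecidableRel G.Adj] (S : Finset V) :
    Matrix (addNode G S).Dart (addNode G S).Dart ℂ :=
  fun e f => if isNewDart G S e ∧ isNewDart G S f then Bc G S e f else 0

/-- The matrix `X = D F E`. -/
noncomputable def Xmat (G : SimpleGraph V) [DecidableRel G.Adj] (S : Finset V) :
    Matrix (addNode G S).Dart (addNode G S).Dart ℂ :=
  Dblk G S * Fblk G S * Eblk G S

/-- The type of old darts of `G^c`, i.e. the darts of `G`. -/
def OldDart (G : SimpleGraph V) (S : Finset V) : Type _ :=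
  {e : (addNode G S).Dart // ¬ isNewDart G S e}

instance (G : SimpleGraph V) [DecidableRel G.Adj] (S : Finset V) : Fintype (OldDart G S) :=
  inferInstanceAs (Fintype {e : (addNode G S).Dart // ¬ isNewDart G S e})

instance (G : SimpleGraph V) (S : Finset V) : DecidableEq (OldDart G S) :=
  inferInstanceAs (DecidableEq {e : (addNode G S).Dart // ¬ isNewDart G S e})

/-- The NB matrix `B` of the original graph `G`, realized as the old-edge block of `B^c`. -/
def Bold (G : SimpleGraph V) [DecidableRel G.Adj] (S : Finset V) :
    Matrix (OldDart G S) (OldDart G S) ℂ :=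
  fun e f => Bc G S e.1 f.1

/-- The matrix `X = D F E` restricted to its (only nonzero) old-edge block. -/
noncomputable def Xsub (G : SimpleGraph V) [DecidableRel G.Adj] (S : Finset V) :
    Matrix (OldDart G S) (OldDart G S) ℂ :=
  fun e f => Xmat G S e.1 f.1

/-- The spectral radius of a complex matrix. -/
noncomputable def specRad {n : Type*} [Fintype n] [DecidableEq n] (M : Matrix n n ℂ) : ℝ :=
  sSup {r : ℝ | ∃ μ ∈ spectrum ℂ M, r = ‖μ‖}

/-- The induced `p`-norm of a complex matrix: the operator norm of `x ↦ M x` on `ℓᵖ`. -/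
noncomputable def inducedNorm (p : ℝ≥0∞) [Fact (1 ≤ p)] {n : Type*} [Fintype n]
    [DecidableEq n] (M : Matrix n n ℂ) : ℝ :=
  ‖LinearMap.toContinuousLinearMap
      (((WithLp.linearEquiv p ℂ (n → ℂ)).symm.toLinearMap.comp
          M.mulVecLin).comp
        (WithLp.linearEquiv p ℂ (n → ℂ)).toLinearMap)‖


section GraphHelpers

variable (G : SimpleGraph V) [DecidableRel G.Adj] (S : Finset V)

lemma dart_not_both_none (e : (addNode G S).Dart) :
    ¬ (e.toProd.1 = none ∧ e.toProd.2 = none) := by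
  rintro ⟨h1, h2⟩
  have h := e.adj
  rw [h1, h2] at h
  exact h

lemma mulVec_row_zero {n : Type*} [Fintype n] (M : Matrix n n ℂ) (x : n → ℂ) (e : n)
    (h : ∀ f, M e f = 0) : (M *ᵥ x) e = 0 := by
  simp only [Matrix.mulVec, dotProduct]
  exact Finset.sum_eq_zero fun f _ => by rw [h f, zero_mul]

lemma sum_old_transfer (M : Matrix (addNode G S).Dart (addNode G S).Dart ℂ)
    (hM : ∀ e f, isNewDart G S f → M e f = 0) (x : (addNode G S).Dart → ℂ)
    (e : (addNode G S).Dart) :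
    (M *ᵥ x) e = ∑ f : OldDart G S, M e f.1 * x f.1 := by
  simp only [Matrix.mulVec, dotProduct]
  rw [← Fintype.sum_subtype_add_sum_subtype (fun f => ¬ isNewDart G S f)
    (fun f => M e f * x f)]
  have h2 : ∑ f : {f // ¬¬ isNewDart G S f}, M e f.1 * x f.1 = 0 :=
    Finset.sum_eq_zero fun f _ => by rw [hM e f.1 (not_not.mp f.2), zero_mul]
  rw [h2, add_zero]
  rfl

end GraphHelpers

section Helpers

/-! ### Auxiliary lemmas -/

-- PiLp norm monotonicity
lemma piLp_norm_mono (p : ℝ≥0∞) [Fact (1 ≤ p)] {n : Type*} [Fintype n]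
    (f g : PiLp p (fun _ : n => ℂ)) (h : ∀ i, ‖f i‖ ≤ ‖g i‖) : ‖f‖ ≤ ‖g‖ := by
  rcases eq_or_ne p ∞ with rfl | hp
  · rw [PiLp.norm_eq_ciSup, PiLp.norm_eq_ciSup]
    exact ciSup_mono (Set.Finite.bddAbove (Set.finite_range _)) h
  · have hp0 : 0 < p.toReal := by
      refine ENNReal.toReal_pos (fun h0 => ?_) hp
      have := (Fact.out : (1:ℝ≥0∞) ≤ p)
      simp [h0] at this
    rw [PiLp.norm_eq_sum hp0, PiLp.norm_eq_sum hp0]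
    have hsum : ∑ i, ‖f i‖ ^ p.toReal ≤ ∑ i, ‖g i‖ ^ p.toReal := by
      apply Finset.sum_le_sum
      intro i _
      exact Real.rpow_le_rpow (norm_nonneg _) (h i) hp0.le
    exact Real.rpow_le_rpow (by positivity) hsum (by positivity)

lemma norm_eig_le_inducedNorm (p : ℝ≥0∞) [Fact (1 ≤ p)] {n : Type*} [Fintype n]
    [DecidableEq n] (M : Matrix n n ℂ) {μ : ℂ} {v : n → ℂ}
    (hv : v ≠ 0) (h : M.mulVec v = μ • v) : ‖μ‖ ≤ inducedNorm p M := by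
  set T := LinearMap.toContinuousLinearMap
      (((WithLp.linearEquiv p ℂ (n → ℂ)).symm.toLinearMap.comp
          M.mulVecLin).comp
        (WithLp.linearEquiv p ℂ (n → ℂ)).toLinearMap) with hT
  have hind : inducedNorm p M = ‖T‖ := rfl
  set x : WithLp p (n → ℂ) := (WithLp.linearEquiv p ℂ (n → ℂ)).symm v with hx
  have hTx : T x = μ • x := by
    rw [hT]
    rw [LinearMap.coe_toContinuousLinearMap']
    show (WithLp.linearEquiv p ℂ (n → ℂ)).symm
        (M.mulVecLin ((WithLp.linearEquiv p ℂ (n → ℂ)) x)) = μ • x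
    rw [hx, LinearEquiv.apply_symm_apply, Matrix.mulVecLin_apply, h]
    exact (WithLp.linearEquiv p ℂ (n → ℂ)).symm.map_smul μ v
  have hx0 : x ≠ 0 := by
    rw [hx]
    intro h0
    apply hv
    have h1 := congrArg (WithLp.linearEquiv p ℂ (n → ℂ)) h0
    rwa [LinearEquiv.apply_symm_apply, map_zero] at h1
  have hxn : 0 < ‖x‖ := norm_pos_iff.mpr hx0
  rw [hind]
  rw [← mul_le_mul_iff_left₀ hxn]
  calc ‖μ‖ * ‖x‖ = ‖T x‖ := by rw [hTx, norm_smul]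
    _ ≤ ‖T‖ * ‖x‖ := T.le_opNorm x

lemma inducedNorm_mul_le (p : ℝ≥0∞) [Fact (1 ≤ p)] {n : Type*} [Fintype n]
    [DecidableEq n] (A B : Matrix n n ℂ) :
    inducedNorm p (A * B) ≤ inducedNorm p A * inducedNorm p B := by
  unfold inducedNorm
  have hcomp : LinearMap.toContinuousLinearMap
      (((WithLp.linearEquiv p ℂ (n → ℂ)).symm.toLinearMap.comp
          (A * B).mulVecLin).comp
        (WithLp.linearEquiv p ℂ (n → ℂ)).toLinearMap) =
      (LinearMap.toContinuousLinearMap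
      (((WithLp.linearEquiv p ℂ (n → ℂ)).symm.toLinearMap.comp
          A.mulVecLin).comp
        (WithLp.linearEquiv p ℂ (n → ℂ)).toLinearMap)).comp
      (LinearMap.toContinuousLinearMap
      (((WithLp.linearEquiv p ℂ (n → ℂ)).symm.toLinearMap.comp
          B.mulVecLin).comp
        (WithLp.linearEquiv p ℂ (n → ℂ)).toLinearMap)) := by
    ext x
    simp only [ContinuousLinearMap.comp_apply, LinearMap.coe_toContinuousLinearMap',
      LinearMap.comp_apply, LinearEquiv.coe_toLinearMap, LinearEquiv.apply_symm_apply,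
      Matrix.mulVecLin_apply]
    rw [Matrix.mulVec_mulVec]
  rw [hcomp]
  exact ContinuousLinearMap.opNorm_comp_le _ _

lemma inducedNorm_nonneg (p : ℝ≥0∞) [Fact (1 ≤ p)] {n : Type*} [Fintype n]
    [DecidableEq n] (M : Matrix n n ℂ) : 0 ≤ inducedNorm p M := norm_nonneg _

lemma inducedNorm_diagonal_le (p : ℝ≥0∞) [Fact (1 ≤ p)] {n : Type*} [Fintype n]
    [DecidableEq n] (d : n → ℂ) {C : ℝ} (hC : 0 ≤ C) (h : ∀ i, ‖d i‖ ≤ C) :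
    inducedNorm p (Matrix.diagonal d) ≤ C := by
  unfold inducedNorm
  apply ContinuousLinearMap.opNorm_le_bound _ hC
  intro x
  simp only [LinearMap.coe_toContinuousLinearMap', LinearMap.comp_apply,
    LinearEquiv.coe_toLinearMap, Matrix.mulVecLin_apply]
  have hkey : ‖(WithLp.linearEquiv p ℂ (n → ℂ)).symm
      (Matrix.diagonal d *ᵥ (WithLp.linearEquiv p ℂ (n → ℂ)) x)‖ ≤ ‖(C : ℂ) • x‖ := by
    apply piLp_norm_mono
    intro i
    show ‖(Matrix.diagonal d *ᵥ (WithLp.linearEquiv p ℂ (n → ℂ)) x) i‖ ≤ ‖((C:ℂ) • x) i‖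
    rw [Matrix.mulVec_diagonal]
    have h2 : ((C:ℂ) • x) i = (C:ℂ) * (WithLp.linearEquiv p ℂ (n → ℂ)) x i := rfl
    rw [h2, norm_mul, norm_mul, Complex.norm_real, Real.norm_eq_abs, abs_of_nonneg hC]
    exact mul_le_mul_of_nonneg_right (h i) (norm_nonneg _)
  refine hkey.trans ?_
  rw [norm_smul]
  simp [abs_of_nonneg hC]

lemma matrix_mem_spectrum_iff {n : Type*} [Fintype n] [DecidableEq n]
    (M : Matrix n n ℂ) (μ : ℂ) :
    μ ∈ spectrum ℂ M ↔ ∃ v, v ≠ 0 ∧ M.mulVec v = μ • v := by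
  rw [← AlgEquiv.spectrum_eq (Matrix.toLinAlgEquiv' (R := ℂ) (n := n)) M,
    ← Module.End.hasEigenvalue_iff_mem_spectrum]
  constructor
  · intro h
    obtain ⟨v, hv⟩ := h.exists_hasEigenvector
    refine ⟨v, hv.2, ?_⟩
    have := Module.End.mem_eigenspace_iff.mp hv.1
    rwa [Matrix.toLinAlgEquiv'_apply] at this
  · rintro ⟨v, hv0, hv⟩
    refine Module.End.hasEigenvalue_of_hasEigenvector
      ⟨Module.End.mem_eigenspace_iff.mpr ?_, hv0⟩
    rwa [Matrix.toLinAlgEquiv'_apply]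

lemma specRad_set_finite {n : Type*} [Fintype n] [DecidableEq n] (M : Matrix n n ℂ) :
    {r : ℝ | ∃ μ ∈ spectrum ℂ M, r = ‖μ‖}.Finite := by
  have : {r : ℝ | ∃ μ ∈ spectrum ℂ M, r = ‖μ‖} = (fun μ : ℂ => ‖μ‖) '' spectrum ℂ M := by
    ext r
    simp only [Set.mem_setOf_eq, Set.mem_image]
    constructor
    · rintro ⟨μ, hμ, rfl⟩; exact ⟨μ, hμ, rfl⟩
    · rintro ⟨μ, hμ, rfl⟩; exact ⟨μ, hμ, rfl⟩
  rw [this]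
  exact (Matrix.finite_spectrum M).image _

lemma norm_le_specRad {n : Type*} [Fintype n] [DecidableEq n] {M : Matrix n n ℂ}
    {μ : ℂ} (h : μ ∈ spectrum ℂ M) : ‖μ‖ ≤ specRad M :=
  le_csSup (specRad_set_finite M).bddAbove ⟨μ, h, rfl⟩

lemma specRad_exists_eig {n : Type*} [Fintype n] [DecidableEq n] [Nonempty n]
    (M : Matrix n n ℂ) : ∃ μ ∈ spectrum ℂ M, specRad M = ‖μ‖ := by
  have hne : {r : ℝ | ∃ μ ∈ spectrum ℂ M, r = ‖μ‖}.Nonempty := by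
    obtain ⟨c, hc⟩ := Module.End.exists_eigenvalue
      (Matrix.toLinAlgEquiv' (R := ℂ) (n := n) M : Module.End ℂ (n → ℂ))
    have : c ∈ spectrum ℂ M := by
      rw [← AlgEquiv.spectrum_eq (Matrix.toLinAlgEquiv' (R := ℂ) (n := n)) M]
      exact hc.mem_spectrum
    exact ⟨‖c‖, c, this, rfl⟩
  have := hne.csSup_mem (specRad_set_finite M)
  exact this

end Helpers

/-- with `λ_c = λ₁ + ε_c` the Perron eigenvalue after node addition and
`γ = min_{i ≠ 1} |λ₁ − λ_i|` the spectral gap of `B`, for any induced `p`-norm,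
`ε_c ≤ max { ‖LXR‖_p / λ₁², √(‖LXR‖_p / γ) − λ₁ }`. -/
theorem eps_bound (G : SimpleGraph V) [DecidableRel G.Adj] (S : Finset V)
    (hconn : G.Connected) (hdeg : ∀ v : V, 2 ≤ G.degree v) (hd : 2 ≤ S.card)
    (R L : Matrix (OldDart G S) (OldDart G S) ℂ) (lam : OldDart G S → ℂ)
    (hdiag : Bold G S = R * Matrix.diagonal lam * L) (hLR : L * R = 1)
    (i₁ : OldDart G S) (hi₁ : lam i₁ = (specRad (Bold G S) : ℂ))
    (p : ℝ≥0∞) [Fact (1 ≤ p)] :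
    let lam1 : ℝ := specRad (Bold G S)
    let lamc : ℝ := specRad (Bc G S)
    let γ : ℝ := sInf {r : ℝ | ∃ i, i ≠ i₁ ∧ r = ‖(lam1 : ℂ) - lam i‖}
    lamc - lam1 ≤
      max (inducedNorm p (L * Xsub G S * R) / lam1 ^ 2)
        (Real.sqrt (inducedNorm p (L * Xsub G S * R) / γ) - lam1) := by
  intro lam1 lamc γ
  classical
  set N := inducedNorm p (L * Xsub G S * R) with hN
  have hN0 : 0 ≤ N := inducedNorm_nonneg p _
  rcases le_or_gt (lamc - lam1) 0 with hle | hε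
  · calc lamc - lam1 ≤ 0 := hle
      _ ≤ N / lam1 ^ 2 := div_nonneg hN0 (sq_nonneg _)
      _ ≤ _ := le_max_left _ _
  have hRL : R * L = 1 := mul_eq_one_comm.mp hLR
  -- every `lam j` is an eigenvalue of `Bold`
  have hspec : ∀ j, lam j ∈ spectrum ℂ (Bold G S) := by
    intro j
    rw [matrix_mem_spectrum_iff]
    refine ⟨R *ᵥ (Pi.single j 1 : OldDart G S → ℂ), ?_, ?_⟩
    · intro h0
      have h1 : (L * R) *ᵥ (Pi.single j 1 : OldDart G S → ℂ) = 0 := by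
        rw [← Matrix.mulVec_mulVec, h0, Matrix.mulVec_zero]
      rw [hLR, Matrix.one_mulVec] at h1
      have h2 := congrFun h1 j
      rw [Pi.single_eq_same] at h2
      exact one_ne_zero h2
    · have hsingle : (Matrix.diagonal lam) *ᵥ (Pi.single j 1 : OldDart G S → ℂ)
          = lam j • (Pi.single j 1 : OldDart G S → ℂ) := by
        funext i
        rw [Matrix.mulVec_diagonal]
        by_cases hij : i = j
        · subst hij; simp
        · simp [Pi.single_eq_of_ne hij]
      calc Bold G S *ᵥ (R *ᵥ (Pi.single j 1 : OldDart G S → ℂ))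
          = (Bold G S * R) *ᵥ (Pi.single j 1 : OldDart G S → ℂ) := Matrix.mulVec_mulVec _ _ _
        _ = (R * Matrix.diagonal lam) *ᵥ (Pi.single j 1 : OldDart G S → ℂ) := by
            rw [hdiag, Matrix.mul_assoc (R * Matrix.diagonal lam) L R, hLR, Matrix.mul_one]
        _ = R *ᵥ ((Matrix.diagonal lam) *ᵥ (Pi.single j 1 : OldDart G S → ℂ)) :=
            (Matrix.mulVec_mulVec _ _ _).symm
        _ = R *ᵥ (lam j • (Pi.single j 1 : OldDart G S → ℂ)) := by rw [hsingle]
        _ = lam j • (R *ᵥ (Pi.single j 1 : OldDart G S → ℂ)) := Matrix.mulVec_smul _ _ _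
  have hlam_le : ∀ j, ‖lam j‖ ≤ lam1 := fun j => norm_le_specRad (hspec j)
  -- `lam1 > 0`
  have hlam1_pos : 0 < lam1 := by
    by_contra hcon
    push_neg at hcon
    have hz : ∀ j, lam j = 0 := by
      intro j
      have h1 : ‖lam j‖ ≤ 0 := (hlam_le j).trans hcon
      have h2 : ‖lam j‖ = 0 := le_antisymm h1 (norm_nonneg _)
      exact norm_eq_zero.mp h2
    have hdiag0 : Matrix.diagonal lam = 0 := by
      ext i k
      by_cases h : i = k
      · subst h; simp [Matrix.diagonal_apply_eq, hz]
      · simp [Matrix.diagonal_apply_ne _ h]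
    have hB0 : Bold G S = 0 := by rw [hdiag, hdiag0, Matrix.mul_zero, Matrix.zero_mul]
    obtain ⟨v₀⟩ := hconn.nonempty
    have h2 : 1 < (G.neighborFinset v₀).card := by
      have h3 := hdeg v₀
      have h4 : (G.neighborFinset v₀).card = G.degree v₀ := G.card_neighborFinset_eq_degree v₀
      omega
    obtain ⟨x, hx, y, hy, hxy⟩ := Finset.one_lt_card.mp h2
    rw [SimpleGraph.mem_neighborFinset] at hx hy
    have hadj1 : (addNode G S).Adj (some x) (some v₀) := G.adj_symm hx
    have hadj2 : (addNode G S).Adj (some v₀) (some y) := hy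
    have hBone : Bold G S ⟨⟨(some v₀, some y), hadj2⟩, by simp [isNewDart]⟩
        ⟨⟨(some x, some v₀), hadj1⟩, by simp [isNewDart]⟩ = 1 := by
      show (if (some v₀ = some v₀ ∧ (some y : Option V) ≠ some x) then (1:ℂ) else 0) = 1
      rw [if_pos ⟨rfl, fun h => hxy (Option.some_injective V h).symm⟩]
    rw [hB0] at hBone
    exact zero_ne_one hBone
  -- the Perron eigenvalue of `Bc` and its eigenvector
  have hSne : S.Nonempty := Finset.card_pos.mp (by omega)
  obtain ⟨s₀, hs₀⟩ := hSne
  have hDartNe : Nonempty ((addNode G S).Dart) :=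
    ⟨⟨(some s₀, none), (hs₀ : (addNode G S).Adj (some s₀) none)⟩⟩
  obtain ⟨μ, hμspec, hμnorm⟩ := specRad_exists_eig (Bc G S)
  have hlc : lamc = ‖μ‖ := hμnorm
  obtain ⟨w, hw0, hw⟩ := (matrix_mem_spectrum_iff _ _).mp hμspec
  have hμnz : μ ≠ 0 := by
    intro h0
    rw [h0, norm_zero] at hlc
    linarith
  -- block decomposition
  set Ablk : Matrix (addNode G S).Dart (addNode G S).Dart ℂ :=
    fun e f => if ¬ isNewDart G S e ∧ ¬ isNewDart G S f then Bc G S e f else 0 with hAdef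
  have hArow : ∀ e f, isNewDart G S e → Ablk e f = 0 := fun e f he => if_neg (fun h => h.1 he)
  have hAcol : ∀ e f, isNewDart G S f → Ablk e f = 0 := fun e f hf => if_neg (fun h => h.2 hf)
  have hDrow : ∀ e f, isNewDart G S e → Dblk G S e f = 0 := fun e f he => if_neg (fun h => h.1 he)
  have hDcol : ∀ e f, ¬ isNewDart G S f → Dblk G S e f = 0 := fun e f hf => if_neg (fun h => hf h.2)
  have hErow : ∀ e f, ¬ isNewDart G S e → Eblk G S e f = 0 := fun e f he => if_neg (fun h => he h.1)
  have hEcol : ∀ e f, isNewDart G S f → Eblk G S e f = 0 := fun e f hf => if_neg (fun h => h.2 hf)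
  have hFrow : ∀ e f, ¬ isNewDart G S e → Fblk G S e f = 0 := fun e f he => if_neg (fun h => he h.1)
  have hFcol : ∀ e f, ¬ isNewDart G S f → Fblk G S e f = 0 := fun e f hf => if_neg (fun h => hf h.2)
  have hBc_eq : ∀ e f : (addNode G S).Dart, Bc G S e f =
      if f.toProd.2 = e.toProd.1 ∧ e.toProd.2 ≠ f.toProd.1 then 1 else 0 := fun e f => rfl
  have hsplit : Bc G S = Ablk + Dblk G S + Eblk G S + Fblk G S := by
    ext e f
    simp only [Matrix.add_apply]
    rw [hAdef]
    unfold Dblk Eblk Fblk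
    by_cases he : isNewDart G S e <;> by_cases hf : isNewDart G S f <;> simp [he, hf]
  have hDE : Dblk G S * Eblk G S = 0 := by
    ext e f
    rw [Matrix.mul_apply, Matrix.zero_apply]
    apply Finset.sum_eq_zero
    intro g _
    by_cases hg : isNewDart G S g
    · by_cases he : isNewDart G S e
      · rw [hDrow e g he, zero_mul]
      · by_cases hf : isNewDart G S f
        · rw [hEcol g f hf, mul_zero]
        · rcases hg with hg1 | hg2
          · have hz : Eblk G S g f = 0 := by
              show (if isNewDart G S g ∧ ¬ isNewDart G S f then Bc G S g f else 0) = 0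
              rw [hBc_eq]
              by_cases hcond : isNewDart G S g ∧ ¬ isNewDart G S f
              · rw [if_pos hcond, if_neg]
                rintro ⟨h1, -⟩
                exact hf (Or.inr (h1.trans hg1))
              · exact if_neg hcond
            rw [hz, mul_zero]
          · have hz : Dblk G S e g = 0 := by
              show (if ¬ isNewDart G S e ∧ isNewDart G S g then Bc G S e g else 0) = 0
              rw [hBc_eq]
              by_cases hcond : ¬ isNewDart G S e ∧ isNewDart G S g
              · rw [if_pos hcond, if_neg]
                rintro ⟨h1, -⟩
                exact he (Or.inl (h1.symm.trans hg2))
              · exact if_neg hcond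
            rw [hz, zero_mul]
    · rw [hDcol e g hg, zero_mul]
  have hFF : Fblk G S * Fblk G S = 0 := by
    ext e f
    rw [Matrix.mul_apply, Matrix.zero_apply]
    apply Finset.sum_eq_zero
    intro g _
    by_cases hg : isNewDart G S g
    · by_cases he : isNewDart G S e
      · by_cases hf : isNewDart G S f
        · -- all new : use non-backtracking + no (none,none) dart
          have hz : Bc G S e g * Bc G S g f = 0 := by
            rw [hBc_eq, hBc_eq]
            by_cases h1 : g.toProd.2 = e.toProd.1 ∧ e.toProd.2 ≠ g.toProd.1
            · by_cases h2 : f.toProd.2 = g.toProd.1 ∧ g.toProd.2 ≠ f.toProd.1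
              · exfalso
                apply dart_not_both_none G S g
                rcases hg with hg1 | hg2
                · have he2 : e.toProd.2 ≠ none := fun hc => h1.2 (hc.trans hg1.symm)
                  have he1 : e.toProd.1 = none := by
                    rcases he with h | h
                    · exact h
                    · exact absurd h he2
                  exact ⟨hg1, h1.1.symm ▸ he1⟩
                · have hf1 : f.toProd.1 ≠ none := fun hc => h2.2 (hg2.trans hc.symm)
                  have hf2 : f.toProd.2 = none := by
                    rcases hf with h | h
                    · exact absurd h hf1
                    · exact h
                  exact ⟨h2.1.symm.trans hf2, hg2⟩
              · rw [if_neg h2, mul_zero]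
            · rw [if_neg h1, zero_mul]
          have he1 : Fblk G S e g = Bc G S e g := if_pos ⟨he, hg⟩
          have he2 : Fblk G S g f = Bc G S g f := if_pos ⟨hg, hf⟩
          rw [he1, he2, hz]
        · rw [hFcol g f hf, mul_zero]
      · rw [hFrow e g he, zero_mul]
    · rw [hFcol e g hg, zero_mul]
  -- decompose the eigenvalue equation
  have hW : Ablk *ᵥ w + Dblk G S *ᵥ w + Eblk G S *ᵥ w + Fblk G S *ᵥ w = μ • w := by
    rw [← Matrix.add_mulVec, ← Matrix.add_mulVec, ← Matrix.add_mulVec, ← hsplit]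
    exact hw
  set v : (addNode G S).Dart → ℂ := fun e => if isNewDart G S e then w e else 0 with hvdef
  set u : OldDart G S → ℂ := fun e => w e.1 with hudef
  have hv1 : Eblk G S *ᵥ w + Fblk G S *ᵥ w = μ • v := by
    funext e
    have hWe := congrFun hW e
    simp only [Pi.add_apply, Pi.smul_apply, smul_eq_mul] at hWe ⊢
    by_cases he : isNewDart G S e
    · rw [mulVec_row_zero _ _ _ (fun f => hArow e f he),
        mulVec_row_zero _ _ _ (fun f => hDrow e f he), zero_add, zero_add] at hWe
      rw [hWe]
      congr 1
      simp [hvdef, he]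
    · rw [mulVec_row_zero _ _ _ (fun f => hErow e f he),
        mulVec_row_zero _ _ _ (fun f => hFrow e f he), zero_add]
      simp [hvdef, he]
  have hFveq : Fblk G S *ᵥ v = Fblk G S *ᵥ w := by
    funext e
    simp only [Matrix.mulVec, dotProduct]
    apply Finset.sum_congr rfl
    intro f _
    by_cases hf : isNewDart G S f
    · simp [hvdef, hf]
    · rw [hFcol e f hf, zero_mul, zero_mul]
  have hDveq : Dblk G S *ᵥ v = Dblk G S *ᵥ w := by
    funext e
    simp only [Matrix.mulVec, dotProduct]
    apply Finset.sum_congr rfl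
    intro f _
    by_cases hf : isNewDart G S f
    · simp [hvdef, hf]
    · rw [hDcol e f hf, zero_mul, zero_mul]
  have hFw : (Fblk G S * Eblk G S) *ᵥ w = μ • (Fblk G S *ᵥ w) := by
    have h2 : Fblk G S *ᵥ (Eblk G S *ᵥ w) + Fblk G S *ᵥ (Fblk G S *ᵥ w)
        = μ • (Fblk G S *ᵥ v) := by
      rw [← Matrix.mulVec_add, hv1, Matrix.mulVec_smul]
    rw [hFveq, Matrix.mulVec_mulVec, Matrix.mulVec_mulVec, hFF, Matrix.zero_mulVec,
      add_zero] at h2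
    exact h2
  have hDFw : Dblk G S *ᵥ (Fblk G S *ᵥ w) = μ • (Dblk G S *ᵥ w) := by
    have h2 : Dblk G S *ᵥ (Eblk G S *ᵥ w) + Dblk G S *ᵥ (Fblk G S *ᵥ w)
        = μ • (Dblk G S *ᵥ v) := by
      rw [← Matrix.mulVec_add, hv1, Matrix.mulVec_smul]
    rw [hDveq, Matrix.mulVec_mulVec, hDE, Matrix.zero_mulVec, zero_add] at h2
    exact h2
  have hFwv : Fblk G S *ᵥ w = μ⁻¹ • ((Fblk G S * Eblk G S) *ᵥ w) := by
    rw [hFw, inv_smul_smul₀ hμnz]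
  have hDw : Dblk G S *ᵥ w = (μ⁻¹ * μ⁻¹) • (Xmat G S *ᵥ w) := by
    have h3 := hDFw
    rw [hFwv, Matrix.mulVec_smul, Matrix.mulVec_mulVec, ← Matrix.mul_assoc] at h3
    calc Dblk G S *ᵥ w = μ⁻¹ • (μ • (Dblk G S *ᵥ w)) := (inv_smul_smul₀ hμnz _).symm
      _ = μ⁻¹ • (μ⁻¹ • ((Dblk G S * Fblk G S * Eblk G S) *ᵥ w)) := by rw [← h3]
      _ = (μ⁻¹ * μ⁻¹) • (Xmat G S *ᵥ w) := by rw [smul_smul]; rfl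
  -- transfer to the old-dart block
  have hAtrans : ∀ e : OldDart G S, (Ablk *ᵥ w) e.1 = (Bold G S *ᵥ u) e := by
    intro e
    rw [sum_old_transfer G S Ablk (fun e f hf => hAcol e f hf) w e.1]
    show _ = ∑ f : OldDart G S, Bold G S e f * u f
    apply Finset.sum_congr rfl
    intro f _
    congr 1
    show (if ¬ isNewDart G S e.1 ∧ ¬ isNewDart G S f.1 then Bc G S e.1 f.1 else 0)
        = Bc G S e.1 f.1
    exact if_pos ⟨e.2, f.2⟩
  have hXcol : ∀ e f, isNewDart G S f → Xmat G S e f = 0 := by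
    intro e f hf
    show (Dblk G S * Fblk G S * Eblk G S) e f = 0
    rw [Matrix.mul_apply]
    exact Finset.sum_eq_zero fun g _ => by rw [hEcol g f hf, mul_zero]
  have hXtrans : ∀ e : OldDart G S, (Xmat G S *ᵥ w) e.1 = (Xsub G S *ᵥ u) e := by
    intro e
    rw [sum_old_transfer G S _ hXcol w e.1]
    show _ = ∑ f : OldDart G S, Xsub G S e f * u f
    exact Finset.sum_congr rfl fun f _ => rfl
  have hmain : Bold G S *ᵥ u + (μ⁻¹ * μ⁻¹) • (Xsub G S *ᵥ u) = μ • u := by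
    funext e
    have hWe := congrFun hW e.1
    simp only [Pi.add_apply, Pi.smul_apply, smul_eq_mul] at hWe ⊢
    rw [mulVec_row_zero _ _ _ (fun f => hErow e.1 f e.2),
      mulVec_row_zero _ _ _ (fun f => hFrow e.1 f e.2), add_zero, add_zero] at hWe
    rw [hAtrans e] at hWe
    have hDe := congrFun hDw e.1
    simp only [Pi.smul_apply, smul_eq_mul] at hDe
    rw [hDe, hXtrans e] at hWe
    exact hWe
  have hu0 : u ≠ 0 := by
    intro hu
    have hwold : ∀ f, ¬ isNewDart G S f → w f = 0 := fun f hf => congrFun hu ⟨f, hf⟩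
    have hEw : Eblk G S *ᵥ w = 0 := by
      funext e
      simp only [Matrix.mulVec, dotProduct, Pi.zero_apply]
      apply Finset.sum_eq_zero
      intro f _
      by_cases hf : isNewDart G S f
      · rw [hEcol e f hf, zero_mul]
      · rw [hwold f hf, mul_zero]
    have hFww : Fblk G S *ᵥ w = 0 := by
      have h4 := hFw
      rw [← Matrix.mulVec_mulVec, hEw, Matrix.mulVec_zero] at h4
      exact (smul_eq_zero.mp h4.symm).resolve_left hμnz
    have hv0 : v = 0 := by
      have h0 : (0 : (addNode G S).Dart → ℂ) = μ • v := by
        rw [← hv1, hEw, hFww, add_zero]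
      exact (smul_eq_zero.mp h0.symm).resolve_left hμnz
    apply hw0
    funext f
    by_cases hf : isNewDart G S f
    · have h5 := congrFun hv0 f
      simpa [hvdef, hf] using h5
    · exact hwold f hf
  -- pass to the diagonalizing basis
  set y : OldDart G S → ℂ := L *ᵥ u with hydef
  have hu_eq : u = R *ᵥ y := by
    calc u = (R * L) *ᵥ u := by rw [hRL, Matrix.one_mulVec]
      _ = R *ᵥ (L *ᵥ u) := (Matrix.mulVec_mulVec _ _ _).symm
  have hy0 : y ≠ 0 := by
    intro h0
    apply hu0
    rw [hu_eq, h0, Matrix.mulVec_zero]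
  have hyeq : Matrix.diagonal lam *ᵥ y + (μ⁻¹ * μ⁻¹) • ((L * Xsub G S * R) *ᵥ y)
      = μ • y := by
    have h6 := congrArg (fun z => L *ᵥ z) hmain
    simp only [Matrix.mulVec_add, Matrix.mulVec_smul] at h6
    have h1 : L *ᵥ (Bold G S *ᵥ u) = Matrix.diagonal lam *ᵥ y := by
      rw [Matrix.mulVec_mulVec, hdiag]
      rw [show L * (R * Matrix.diagonal lam * L) = Matrix.diagonal lam * L by
        rw [← Matrix.mul_assoc, ← Matrix.mul_assoc, hLR, Matrix.one_mul]]
      rw [← Matrix.mulVec_mulVec]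
    have h2 : L *ᵥ (Xsub G S *ᵥ u) = (L * Xsub G S * R) *ᵥ y := by
      conv_lhs => rw [hu_eq]
      rw [Matrix.mulVec_mulVec, Matrix.mulVec_mulVec]
    rw [h1, h2] at h6
    exact h6
  -- the reduced eigenvalue problem
  have hμlam : ∀ j, (lamc - lam1) ≤ ‖μ - lam j‖ := by
    intro j
    have h1 : ‖μ‖ - ‖lam j‖ ≤ ‖μ - lam j‖ := norm_sub_norm_le _ _
    have h2 : ‖lam j‖ ≤ lam1 := hlam_le j
    linarith [hlc]
  have hμlam0 : ∀ j, μ - lam j ≠ 0 := by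
    intro j h0
    have h1 := hμlam j
    rw [h0, norm_zero] at h1
    linarith
  set dv : OldDart G S → ℂ := fun j => (μ - lam j)⁻¹ with hdvdef
  have hMeig : (Matrix.diagonal dv * (L * Xsub G S * R)) *ᵥ y = (μ * μ) • y := by
    funext j
    have hj := congrFun hyeq j
    simp only [Pi.add_apply, Pi.smul_apply, smul_eq_mul] at hj
    rw [Matrix.mulVec_diagonal] at hj
    have hstep : (μ⁻¹ * μ⁻¹) * ((L * Xsub G S * R) *ᵥ y) j = (μ - lam j) * y j := by
      linear_combination hj
    have hcan : (μ * μ) * (μ⁻¹ * μ⁻¹) = 1 := by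
      field_simp
    have hLXRy : ((L * Xsub G S * R) *ᵥ y) j = (μ * μ) * ((μ - lam j) * y j) := by
      calc ((L * Xsub G S * R) *ᵥ y) j
          = ((μ * μ) * (μ⁻¹ * μ⁻¹)) * ((L * Xsub G S * R) *ᵥ y) j := by rw [hcan, one_mul]
        _ = (μ * μ) * ((μ⁻¹ * μ⁻¹) * ((L * Xsub G S * R) *ᵥ y) j) := by ring
        _ = (μ * μ) * ((μ - lam j) * y j) := by rw [hstep]
    show ((Matrix.diagonal dv * (L * Xsub G S * R)) *ᵥ y) j = (μ * μ) * y j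
    rw [← Matrix.mulVec_mulVec, Matrix.mulVec_diagonal, hLXRy]
    calc dv j * ((μ * μ) * ((μ - lam j) * y j))
        = ((μ - lam j)⁻¹ * (μ - lam j)) * ((μ * μ) * y j) := by rw [hdvdef]; ring
      _ = (μ * μ) * y j := by rw [inv_mul_cancel₀ (hμlam0 j), one_mul]
  -- norm estimates
  have hnorm1 : ‖μ * μ‖ ≤ inducedNorm p (Matrix.diagonal dv * (L * Xsub G S * R)) :=
    norm_eig_le_inducedNorm p _ hy0 hMeig
  have hnorm2 : inducedNorm p (Matrix.diagonal dv * (L * Xsub G S * R))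
      ≤ inducedNorm p (Matrix.diagonal dv) * N := by
    calc inducedNorm p (Matrix.diagonal dv * (L * Xsub G S * R))
        ≤ inducedNorm p (Matrix.diagonal dv) * inducedNorm p (L * Xsub G S * R) :=
          inducedNorm_mul_le p _ _
      _ = inducedNorm p (Matrix.diagonal dv) * N := by rw [hN]
  have hnorm3 : inducedNorm p (Matrix.diagonal dv) ≤ (lamc - lam1)⁻¹ := by
    apply inducedNorm_diagonal_le p dv (inv_nonneg.mpr hε.le)
    intro j
    rw [hdvdef]
    simp only
    rw [norm_inv]
    exact inv_anti₀ hε (hμlam j)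
  have hchain : lamc ^ 2 ≤ (lamc - lam1)⁻¹ * N := by
    have hsq : ‖μ * μ‖ = lamc ^ 2 := by rw [norm_mul, hlc]; ring
    calc lamc ^ 2 = ‖μ * μ‖ := hsq.symm
      _ ≤ inducedNorm p (Matrix.diagonal dv * (L * Xsub G S * R)) := hnorm1
      _ ≤ inducedNorm p (Matrix.diagonal dv) * N := hnorm2
      _ ≤ (lamc - lam1)⁻¹ * N := mul_le_mul_of_nonneg_right hnorm3 hN0
  have hfin : (lamc - lam1) * lam1 ^ 2 ≤ N := by
    have h1 : (lamc - lam1) * lamc ^ 2 ≤ N := by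
      have h2 := mul_le_mul_of_nonneg_left hchain hε.le
      rw [← mul_assoc, mul_inv_cancel₀ (ne_of_gt hε), one_mul] at h2
      exact h2
    have hlt : lam1 ≤ lamc := by linarith
    have hsq : lam1 ^ 2 ≤ lamc ^ 2 := by nlinarith
    have h3 := mul_le_mul_of_nonneg_left hsq hε.le
    linarith
  have hconc : lamc - lam1 ≤ N / lam1 ^ 2 := by
    rw [le_div_iff₀ (by positivity : (0:ℝ) < lam1 ^ 2)]
    exact hfin
  exact le_trans hconc (le_max_left _ _)
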